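/- arXiv:2411.14173 — 4 statements merged into one kernel-verified Lean document; each statement's English description precedes it below -/
import Mathlib

section
/- Two-sided mollifier estimate (main inequality in the proof of Proposition 3.2): Let Ω be a bounded domain in ℝ^d and μ a positive finite Borel measure on ℝ^d with supp(μ) ⊆ closure(Ω) and μ(Ω) > 0. Let ũ : ℝ^d → ℝ be integrable with ũ = 0 outside Ω, and let f be a μ-integrable function on Ω with f ≥ 0 μ-a.e. such that ∫_{ℝ^d} ũ(x) Δφ(x) dx = ∫_Ω f(x) φ(x) dμ(x) for every φ ∈ C_c^∞(Ω). Let (η_ε)_{ε>0} be a mollifier family. Then for every z ∈ Ω, every ε with 0 < ε < dist(z,∂Ω)/4, and every r with ε < r < dist(z,∂Ω) − 3ε: ∫_{B̄_{r−ε}(z)} f dμ ≤ ∫_{B_r(z)} Δ(η_ε ∗ ũ)(x) dx ≤ ∫_{B̄_{r+2ε}(z)} f dμ, where η_ε ∗ ũ is the convolution (a smooth function), B_r(z) is the open ball and B̄_s(z) the closed ball centered at z. -/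
open MeasureTheory Metric Filter
open scoped Convolution

/-- The classical Laplacian `Δφ = ∑ i, ∂²φ/∂xᵢ²` of `φ : ℝ^d → ℝ`. -/
noncomputable def lapl {d : ℕ} (φ : EuclideanSpace ℝ (Fin d) → ℝ)
    (x : EuclideanSpace ℝ (Fin d)) : ℝ :=
  ∑ i, fderiv ℝ (fun y => fderiv ℝ φ y (EuclideanSpace.single i 1)) x
    (EuclideanSpace.single i 1)

lemma ball_infDist_frontier_subset {E : Type*} [NormedAddCommGroup E] [NormedSpace ℝ E]
    {Ω : Set E} (hΩo : IsOpen Ω) {z : E} (hz : z ∈ Ω) :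
    ball z (infDist z (frontier Ω)) ⊆ Ω := by
  set R := infDist z (frontier Ω) with hR
  rcases le_or_gt R 0 with h | h
  · rw [ball_eq_empty.2 h]; exact Set.empty_subset _
  have hsub : ball z R ⊆ Ω ∪ (closure Ω)ᶜ := by
    intro b hb
    by_cases hbΩ : b ∈ Ω
    · exact Or.inl hbΩ
    refine Or.inr fun hbc => ?_
    have hbf : b ∈ frontier Ω := ⟨hbc, fun hbi => hbΩ (hΩo.interior_eq ▸ hbi)⟩
    have h1 : R ≤ dist z b := infDist_le_dist_of_mem hbf
    rw [mem_ball, dist_comm] at hb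
    linarith
  exact (convex_ball z R).isPreconnected.subset_left_of_subset_union hΩo
    isClosed_closure.isOpen_compl
    (Set.disjoint_left.2 fun a ha hac => hac (subset_closure ha)) hsub
    ⟨z, mem_ball_self h, hz⟩

lemma fderiv_comp_const_sub {E : Type*} [NormedAddCommGroup E] [NormedSpace ℝ E]
    {F : E → ℝ} (hF : Differentiable ℝ F) (x t v : E) :
    fderiv ℝ (fun s => F (x - s)) t v = -fderiv ℝ F (x - t) v := by
  have h1 : HasFDerivAt (fun s : E => x - s) (-(ContinuousLinearMap.id ℝ E)) t :=
    (hasFDerivAt_id t).const_sub x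
  have h2 : HasFDerivAt (fun s => F (x - s))
      ((fderiv ℝ F (x - t)).comp (-(ContinuousLinearMap.id ℝ E))) t :=
    ((hF (x - t)).hasFDerivAt).comp t h1
  rw [h2.fderiv]
  simp

lemma lapl_comp_const_sub {d : ℕ} {g : EuclideanSpace ℝ (Fin d) → ℝ} (hg : ContDiff ℝ (⊤ : ℕ∞) g)
    (x t : EuclideanSpace ℝ (Fin d)) :
    lapl (fun s => g (x - s)) t
      = ∑ i, fderiv ℝ (fun s => fderiv ℝ g s (EuclideanSpace.single i 1)) (x - t)
          (EuclideanSpace.single i 1) := by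
  unfold lapl
  refine Finset.sum_congr rfl fun i _ => ?_
  set e := (EuclideanSpace.single i 1 : EuclideanSpace ℝ (Fin d)) with he
  have hgd : Differentiable ℝ g := hg.differentiable (by simp)
  have hfd : Differentiable ℝ (fun s => fderiv ℝ g s e) :=
    ((hg.fderiv_right (m := 1) (WithTop.coe_le_coe.2 le_top)).clm_apply contDiff_const).differentiable (by simp)
  have h1 : (fun y => fderiv ℝ (fun s => g (x - s)) y e) = fun y => -fderiv ℝ g (x - y) e := by
    funext y; exact fderiv_comp_const_sub hgd x y e
  rw [h1]
  have h2 : fderiv ℝ (fun y => -fderiv ℝ g (x - y) e) t e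
      = -fderiv ℝ (fun y => fderiv ℝ g (x - y) e) t e := by
    rw [fderiv_fun_neg, ContinuousLinearMap.neg_apply]
  rw [h2, fderiv_comp_const_sub hfd x t e, neg_neg]

lemma lapl_conv {d : ℕ} (g uT : EuclideanSpace ℝ (Fin d) → ℝ)
    (hg : ContDiff ℝ (⊤ : ℕ∞) g) (hgsupp : HasCompactSupport g)
    (huT : Integrable uT volume) (x : EuclideanSpace ℝ (Fin d)) :
    lapl (fun w => ∫ y, g (w - y) * uT y) x
      = ∫ t, uT t * lapl (fun s => g (x - s)) t := by
  set L : ℝ →L[ℝ] ℝ →L[ℝ] ℝ := ContinuousLinearMap.lsmul ℝ ℝ with hL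
  have huTloc : LocallyIntegrable uT volume := huT.locallyIntegrable
  have hconv : (fun w => ∫ y, g (w - y) * uT y) = uT ⋆[L, volume] g := by
    funext w
    rw [convolution_def]
    simp only [hL, ContinuousLinearMap.lsmul_apply, smul_eq_mul]
    simp_rw [mul_comm]
  have key : ∀ (k : EuclideanSpace ℝ (Fin d) → ℝ), ContDiff ℝ (⊤ : ℕ∞) k → HasCompactSupport k →
      ∀ (y v : EuclideanSpace ℝ (Fin d)),
      fderiv ℝ (uT ⋆[L, volume] k) y v = (uT ⋆[L, volume] fun a => fderiv ℝ k a v) y := by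
    intro k hk hks y v
    rw [(hks.hasFDerivAt_convolution_right L huTloc (hk.of_le (by simp)) y).fderiv]
    exact convolution_precompR_apply L huTloc (hks.fderiv ℝ) (hk.continuous_fderiv (by simp)) y v
  set e : Fin d → EuclideanSpace ℝ (Fin d) := fun i => EuclideanSpace.single i 1 with he
  set h : Fin d → EuclideanSpace ℝ (Fin d) → ℝ := fun i a => fderiv ℝ g a (e i) with hh
  have hsm : ∀ i, ContDiff ℝ (⊤ : ℕ∞) (h i) :=
    fun i => (hg.fderiv_right (by simp)).clm_apply contDiff_const
  have hcs : ∀ i, HasCompactSupport (h i) := fun i => hgsupp.fderiv_apply ℝ (e i)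
  have hkey2 : ∀ i, (fun y => fderiv ℝ (uT ⋆[L, volume] g) y (e i)) = uT ⋆[L, volume] (h i) :=
    fun i => funext fun y => key g hg hgsupp y (e i)
  have step : ∀ i, fderiv ℝ (fun y => fderiv ℝ (uT ⋆[L, volume] g) y (e i)) x (e i)
      = ∫ t, uT t * fderiv ℝ (h i) (x - t) (e i) := by
    intro i
    rw [hkey2 i, key (h i) (hsm i) (hcs i) x (e i), convolution_def]
    simp only [hL, ContinuousLinearMap.lsmul_apply, smul_eq_mul]
  have hint : ∀ i, Integrable (fun t => uT t * fderiv ℝ (h i) (x - t) (e i)) volume := by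
    intro i
    have h1 : ConvolutionExistsAt uT (fun a => fderiv ℝ (h i) a (e i)) x L volume := by
      refine HasCompactSupport.convolutionExists_right L ?_ huTloc ?_ x
      · exact (hcs i).fderiv_apply ℝ (e i)
      · exact ContDiff.continuous (n := (⊤ : ℕ∞))
          (((hsm i).fderiv_right (by simp)).clm_apply contDiff_const)
    unfold ConvolutionExistsAt at h1
    simpa only [hL, ContinuousLinearMap.lsmul_apply, smul_eq_mul] using h1
  have hL0 : lapl (uT ⋆[L, volume] g) x
      = ∑ i, fderiv ℝ (fun y => fderiv ℝ (uT ⋆[L, volume] g) y (e i)) x (e i) := rfl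
  rw [hconv, hL0, Finset.sum_congr rfl fun i _ => step i,
    ← integral_finset_sum _ fun i _ => hint i]
  congr 1
  funext t
  rw [lapl_comp_const_sub hg x t, Finset.mul_sum]

/-- Two-sided mollifier estimate (main inequality in the proof of Proposition 3.2). -/
theorem mollifier_two_sided_estimate {d : ℕ} (hd : 1 ≤ d)
    (Ω : Set (EuclideanSpace ℝ (Fin d)))
    (hΩo : IsOpen Ω) (hΩconn : IsConnected Ω) (hΩb : Bornology.IsBounded Ω)
    (μ : Measure (EuclideanSpace ℝ (Fin d))) [IsFiniteMeasure μ]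
    (hsupp : μ (closure Ω)ᶜ = 0) (hμΩ : 0 < μ Ω)
    (uT : EuclideanSpace ℝ (Fin d) → ℝ) (huT : Integrable uT volume)
    (huT0 : ∀ x, x ∉ Ω → uT x = 0)
    (f : EuclideanSpace ℝ (Fin d) → ℝ) (hf : IntegrableOn f Ω μ)
    (hf0 : ∀ᵐ x ∂(μ.restrict Ω), 0 ≤ f x)
    (heq : ∀ φ : EuclideanSpace ℝ (Fin d) → ℝ, ContDiff ℝ (⊤ : ℕ∞) φ →
      HasCompactSupport φ → tsupport φ ⊆ Ω →
      ∫ x, uT x * lapl φ x = ∫ x in Ω, f x * φ x ∂μ)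
    (η : ℝ → EuclideanSpace ℝ (Fin d) → ℝ)
    (hηsmooth : ∀ ε : ℝ, 0 < ε → ContDiff ℝ (⊤ : ℕ∞) (η ε))
    (hηpos : ∀ ε : ℝ, 0 < ε → ∀ x, 0 ≤ η ε x)
    (hηsupp : ∀ ε : ℝ, 0 < ε → tsupport (η ε) ⊆ closedBall 0 ε)
    (hηint : ∀ ε : ℝ, 0 < ε → ∫ x, η ε x = 1) :
    ∀ z ∈ Ω, ∀ ε : ℝ, 0 < ε → ε < infDist z (frontier Ω) / 4 →
      ∀ r : ℝ, ε < r → r < infDist z (frontier Ω) - 3 * ε →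
        (∫ x in closedBall z (r - ε), f x ∂μ) ≤
            (∫ x in ball z r, lapl (fun w => ∫ y, η ε (w - y) * uT y) x) ∧
          (∫ x in ball z r, lapl (fun w => ∫ y, η ε (w - y) * uT y) x) ≤
            ∫ x in closedBall z (r + 2 * ε), f x ∂μ := by
  intro z hz ε hε hε4 r hεr hr
  have hne : Nonempty (Fin d) := ⟨⟨0, hd⟩⟩
  have hnt : Nontrivial (EuclideanSpace ℝ (Fin d)) := by
    refine nontrivial_of_ne (EuclideanSpace.single (⟨0, hd⟩ : Fin d) (1 : ℝ)) 0 fun h => ?_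
    have h1 : (EuclideanSpace.single (⟨0, hd⟩ : Fin d) (1 : ℝ)) ⟨0, hd⟩ = 1 := by
      simp [EuclideanSpace.single_apply]
    rw [h] at h1
    simp at h1
  set D := infDist z (frontier Ω) with hD
  have hballD : ball z D ⊆ Ω := ball_infDist_frontier_subset hΩo hz
  have hgsm : ContDiff ℝ (⊤ : ℕ∞) (η ε) := hηsmooth ε hε
  have hgsupp : HasCompactSupport (η ε) :=
    IsCompact.of_isClosed_subset (isCompact_closedBall 0 ε) (isClosed_tsupport _) (hηsupp ε hε)
  -- inclusions
  have hB1 : closedBall z (r - ε) ⊆ Ω := fun w hw =>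
    hballD (mem_ball.2 (lt_of_le_of_lt (mem_closedBall.1 hw) (by linarith)))
  have hB2 : closedBall z (r + 2 * ε) ⊆ Ω := fun w hw =>
    hballD (mem_ball.2 (lt_of_le_of_lt (mem_closedBall.1 hw) (by linarith)))
  -- pointwise identity
  have hpt : ∀ x ∈ ball z r,
      lapl (fun w => ∫ y, η ε (w - y) * uT y) x = ∫ y in Ω, f y * η ε (x - y) ∂μ := by
    intro x hx
    rw [lapl_conv (η ε) uT hgsm hgsupp huT x]
    have hts : tsupport (fun s => η ε (x - s)) ⊆ closedBall x ε := by
      refine closure_minimal ?_ isClosed_closedBall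
      intro s hs
      have h1 : x - s ∈ tsupport (η ε) := subset_closure hs
      have h2 : ‖x - s‖ ≤ ε := mem_closedBall_zero_iff.1 (hηsupp ε hε h1)
      rw [mem_closedBall, dist_eq_norm, ← norm_neg]
      simpa using h2
    have hsubΩ : closedBall x ε ⊆ Ω := by
      intro w hw
      apply hballD
      rw [mem_ball]
      calc dist w z ≤ dist w x + dist x z := dist_triangle _ _ _
        _ < ε + r := add_lt_add_of_le_of_lt (mem_closedBall.1 hw) (mem_ball.1 hx)
        _ < D := by linarith
    exact heq (fun s => η ε (x - s)) (hgsm.comp (contDiff_const.sub contDiff_id))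
      (IsCompact.of_isClosed_subset (isCompact_closedBall x ε) (isClosed_tsupport _) hts)
      (hts.trans hsubΩ)
  -- the kernel k
  set k : EuclideanSpace ℝ (Fin d) → ℝ := fun y => ∫ x in ball z r, η ε (x - y) with hk
  have hηy : ∀ y : EuclideanSpace ℝ (Fin d), Integrable (fun x => η ε (x - y)) volume := by
    intro y
    have hcs : HasCompactSupport (fun x => η ε (x - y)) :=
      hgsupp.comp_homeomorph (Homeomorph.subRight y)
    exact (hgsm.continuous.comp (continuous_id.sub continuous_const)).integrable_of_hasCompactSupport hcs
  have hknn : ∀ y, 0 ≤ k y := fun y =>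
    setIntegral_nonneg measurableSet_ball fun x _ => hηpos ε hε _
  have hkle : ∀ y, k y ≤ 1 := by
    intro y
    have h1 : k y ≤ ∫ x, η ε (x - y) :=
      setIntegral_le_integral (hηy y) (Eventually.of_forall fun x => hηpos ε hε _)
    rw [integral_sub_right_eq_self (η ε) y, hηint ε hε] at h1
    exact h1
  have hball_ae : (ball z r : Set (EuclideanSpace ℝ (Fin d))) =ᵐ[volume] closedBall z r := by
    rw [Filter.eventuallyEq_set]
    have h0 : volume (closedBall z r \ ball z r) = 0 := by
      rw [closedBall_diff_ball]
      exact Measure.addHaar_sphere volume z r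
    have h1 := measure_eq_zero_iff_ae_notMem.1 h0
    filter_upwards [h1] with x hx
    constructor
    · exact fun h => ball_subset_closedBall h
    · intro h
      by_contra hb
      exact hx ⟨h, hb⟩
  have hk1 : ∀ y ∈ closedBall z (r - ε), k y = 1 := by
    intro y hy
    have h1 : k y = ∫ x in closedBall z r, η ε (x - y) := setIntegral_congr_set hball_ae
    have h2 : (∫ x in closedBall z r, η ε (x - y)) = ∫ x, η ε (x - y) := by
      apply setIntegral_eq_integral_of_forall_compl_eq_zero
      intro x hx
      apply image_eq_zero_of_notMem_tsupport
      intro hmem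
      have h3 : dist x y ≤ ε := by
        rw [dist_eq_norm]; exact mem_closedBall_zero_iff.1 (hηsupp ε hε hmem)
      have h4 : dist x z ≤ dist x y + dist y z := dist_triangle _ _ _
      have h5 : dist y z ≤ r - ε := mem_closedBall.1 hy
      exact hx (mem_closedBall.2 (by linarith))
    rw [h1, h2, integral_sub_right_eq_self (η ε) y, hηint ε hε]
  have hk0 : ∀ y, y ∉ closedBall z (r + 2 * ε) → k y = 0 := by
    intro y hy
    have h1 : ∀ x ∈ ball z r, η ε (x - y) = 0 := by
      intro x hx
      apply image_eq_zero_of_notMem_tsupport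
      intro hmem
      have h3 : dist y x ≤ ε := by
        rw [dist_comm, dist_eq_norm]; exact mem_closedBall_zero_iff.1 (hηsupp ε hε hmem)
      have h4 : dist y z ≤ dist y x + dist x z := dist_triangle _ _ _
      have h5 : dist x z < r := mem_ball.1 hx
      have h6 : ¬ dist y z ≤ r + 2 * ε := fun h => hy (mem_closedBall.2 h)
      exact h6 (by linarith)
    have h2 : k y = ∫ x in ball z r, (0 : ℝ) :=
      setIntegral_congr_fun measurableSet_ball fun x hx => h1 x hx
    rw [h2]
    simp
  -- Fubini
  obtain ⟨C, hC⟩ := hgsupp.exists_bound_of_continuous hgsm.continuous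
  haveI : IsFiniteMeasure (volume.restrict (ball z r)) :=
    ⟨by rw [Measure.restrict_apply_univ]; exact measure_ball_lt_top⟩
  have hfint : Integrable f (μ.restrict Ω) := hf
  have hint : Integrable (Function.uncurry fun x y => f y * η ε (x - y))
      ((volume.restrict (ball z r)).prod (μ.restrict Ω)) := by
    have hmeas : AEStronglyMeasurable (Function.uncurry fun x y => f y * η ε (x - y))
        ((volume.restrict (ball z r)).prod (μ.restrict Ω)) := by
      apply AEStronglyMeasurable.mul
      · exact hfint.aestronglyMeasurable.comp_snd
      · exact (hgsm.continuous.comp (continuous_fst.sub continuous_snd)).aestronglyMeasurable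
    refine Integrable.mono' ((integrable_const (1 : ℝ)).mul_prod (hfint.norm.const_mul C)) hmeas
      (Eventually.of_forall fun p => ?_)
    simp only [Function.uncurry, norm_mul]
    rw [one_mul]
    calc ‖f p.2‖ * ‖η ε (p.1 - p.2)‖ ≤ ‖f p.2‖ * C :=
          mul_le_mul_of_nonneg_left (hC _) (norm_nonneg _)
      _ = C * ‖f p.2‖ := mul_comm _ _
  have hswap : (∫ x in ball z r, ∫ y in Ω, f y * η ε (x - y) ∂μ)
      = ∫ y in Ω, (∫ x in ball z r, f y * η ε (x - y)) ∂μ :=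
    integral_integral_swap hint
  have hfk : Integrable (fun y => f y * k y) (μ.restrict Ω) := by
    have h1 := hint.integral_prod_right
    simp only [Function.uncurry] at h1
    have h2 : (fun y => ∫ x in ball z r, f y * η ε (x - y)) = fun y => f y * k y := by
      funext y
      rw [hk, integral_const_mul]
    rwa [h2] at h1
  have hmain : (∫ x in ball z r, lapl (fun w => ∫ y, η ε (w - y) * uT y) x)
      = ∫ y in Ω, f y * k y ∂μ := by
    rw [setIntegral_congr_fun measurableSet_ball hpt, hswap]
    apply setIntegral_congr_fun (hΩo.measurableSet)
    intro y _
    show (∫ x in ball z r, f y * η ε (x - y)) = f y * k y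
    rw [integral_const_mul]
  -- relate set integrals over closed balls to indicator integrals over Ω
  have hind : ∀ (B : Set (EuclideanSpace ℝ (Fin d))), MeasurableSet B → B ⊆ Ω →
      (∫ x in B, f x ∂μ) = ∫ y, B.indicator f y ∂(μ.restrict Ω) := by
    intro B hBm hBΩ
    rw [integral_indicator hBm, Measure.restrict_restrict_of_subset hBΩ]
  constructor
  · rw [hmain, hind _ measurableSet_closedBall hB1]
    apply integral_mono_ae (hfint.indicator measurableSet_closedBall) hfk
    filter_upwards [hf0] with y hy
    by_cases hyB : y ∈ closedBall z (r - ε)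
    · rw [Set.indicator_of_mem hyB, hk1 y hyB, mul_one]
    · rw [Set.indicator_of_notMem hyB]
      exact mul_nonneg hy (hknn y)
  · rw [hmain, hind _ measurableSet_closedBall hB2]
    apply integral_mono_ae hfk (hfint.indicator measurableSet_closedBall)
    filter_upwards [hf0] with y hy
    by_cases hyB : y ∈ closedBall z (r + 2 * ε)
    · rw [Set.indicator_of_mem hyB]
      calc f y * k y ≤ f y * 1 := mul_le_mul_of_nonneg_left (hkle y) hy
        _ = f y := mul_one _
    · rw [Set.indicator_of_notMem hyB, hk0 y hyB, mul_zero]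
end

section
/- Proposition 3.2 (mollified Laplacian converges to the μ-Laplacian on balls): Let Ω be a bounded domain in ℝ^d and μ a positive finite Borel measure on ℝ^d with supp(μ) ⊆ closure(Ω) and μ(Ω) > 0. Let ũ : ℝ^d → ℝ be integrable with ũ = 0 outside Ω, and let f be a μ-integrable function on Ω with f ≥ 0 μ-a.e. such that ∫_{ℝ^d} ũ(x) Δφ(x) dx = ∫_Ω f(x) φ(x) dμ(x) for every φ ∈ C_c^∞(Ω). Let (η_ε)_{ε>0} be a mollifier family. Then for every z ∈ Ω and every r with 0 < r < dist(z, ∂Ω) such that μ({y : |y − z| = r}) = 0, one has lim_{ε→0⁺} ∫_{B_r(z)} Δ(η_ε ∗ ũ)(x) dx = ∫_{B_r(z)} f dμ, where B_r(z) is the open ball of radius r centered at z. -/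
open MeasureTheory Metric Filter Set Convolution

namespace MollAux

variable {d : ℕ}

local notation "E" => EuclideanSpace ℝ (Fin d)
local notation "L" => ContinuousLinearMap.mul ℝ ℝ

lemma contDiff_Dv {g : E → ℝ} (hg : ContDiff ℝ (⊤ : ℕ∞) g) (v : E) :
    ContDiff ℝ (⊤ : ℕ∞) (fun w => fderiv ℝ g w v) :=
  (ContinuousLinearMap.apply ℝ ℝ v).contDiff.comp (hg.fderiv_right (by simp))

lemma fderiv_conv_apply (uT : E → ℝ) (huT : LocallyIntegrable uT volume)
    {g : E → ℝ} (hg : ContDiff ℝ (⊤ : ℕ∞) g) (hcg : HasCompactSupport g) (x v : E) :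
    fderiv ℝ (uT ⋆[L] g) x v = (uT ⋆[L] (fun w => fderiv ℝ g w v)) x := by
  have h := hcg.hasFDerivAt_convolution_right L huT (hg.of_le (by simp)) x
  rw [h.fderiv]
  exact convolution_precompR_apply _ huT (hcg.fderiv ℝ) (hg.continuous_fderiv (by simp)) x v

lemma conv_integrand_integrable (uT : E → ℝ) (huT : LocallyIntegrable uT volume)
    {g : E → ℝ} (hgc : Continuous g) (hcg : HasCompactSupport g) (x : E) :
    Integrable (fun y => uT y * g (x - y)) volume := by
  have := hcg.convolutionExists_right L huT hgc x
  unfold ConvolutionExistsAt at this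
  simpa [ContinuousLinearMap.mul_apply'] using this

lemma lapl_conv (uT : E → ℝ) (huT : LocallyIntegrable uT volume)
    {g : E → ℝ} (hg : ContDiff ℝ (⊤ : ℕ∞) g) (hcg : HasCompactSupport g) (x : E) :
    lapl (uT ⋆[L] g) x = ∫ y, uT y * lapl g (x - y) := by
  have hDv : ∀ v : E, ContDiff ℝ (⊤ : ℕ∞) (fun w => fderiv ℝ g w v) := contDiff_Dv hg
  have hDvc : ∀ v : E, HasCompactSupport (fun w => fderiv ℝ g w v) := fun v =>
    hcg.fderiv_apply ℝ v
  have step : ∀ i : Fin d,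
      fderiv ℝ (fun y => fderiv ℝ (uT ⋆[L] g) y (EuclideanSpace.single i 1)) x
        (EuclideanSpace.single i 1)
      = (uT ⋆[L] fun w => fderiv ℝ (fun w' => fderiv ℝ g w' (EuclideanSpace.single i 1)) w
          (EuclideanSpace.single i 1)) x := by
    intro i
    have h1 : (fun y => fderiv ℝ (uT ⋆[L] g) y (EuclideanSpace.single i 1))
        = uT ⋆[L] (fun w => fderiv ℝ g w (EuclideanSpace.single i 1)) :=
      funext fun y => fderiv_conv_apply uT huT hg hcg y _
    rw [h1, fderiv_conv_apply uT huT (hDv _) (hDvc _) x _]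
  unfold lapl
  simp_rw [step]
  have hconv : ∀ i : Fin d,
      (uT ⋆[L] fun w => fderiv ℝ (fun w' => fderiv ℝ g w' (EuclideanSpace.single i 1)) w
          (EuclideanSpace.single i 1)) x
      = ∫ y, uT y * fderiv ℝ (fun w' => fderiv ℝ g w' (EuclideanSpace.single i 1)) (x - y)
          (EuclideanSpace.single i 1) := by
    intro i
    simp [convolution_def, ContinuousLinearMap.mul_apply']
  simp_rw [hconv]
  rw [← integral_finset_sum]
  · exact integral_congr_ae (Filter.Eventually.of_forall fun y => by
      simp only [lapl, Finset.mul_sum])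
  · intro i _
    exact conv_integrand_integrable uT huT
      ((contDiff_Dv (hDv _) _).continuous) ((hDvc _).fderiv_apply ℝ _) x

lemma fderiv_reflect {h : E → ℝ} (hh : Differentiable ℝ h) (x y v : E) :
    fderiv ℝ (fun w => h (x - w)) y v = - fderiv ℝ h (x - y) v := by
  have H : HasFDerivAt (fun w => h (x - w))
      ((fderiv ℝ h (x - y)).comp (-(ContinuousLinearMap.id ℝ E))) y :=
    (hh (x - y)).hasFDerivAt.comp y ((hasFDerivAt_id y).const_sub x)
  rw [H.fderiv]
  simp

lemma lapl_reflect {g : E → ℝ} (hg : ContDiff ℝ (⊤ : ℕ∞) g) (x y : E) :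
    lapl (fun w => g (x - w)) y = lapl g (x - y) := by
  unfold lapl
  refine Finset.sum_congr rfl fun i _ => ?_
  have h1 : (fun w => fderiv ℝ (fun w' => g (x - w')) w (EuclideanSpace.single i 1))
      = fun w => (fun u => - fderiv ℝ g u (EuclideanSpace.single i 1)) (x - w) :=
    funext fun w => fderiv_reflect (hg.differentiable (by simp)) x w _
  rw [h1, fderiv_reflect (h := fun u => - fderiv ℝ g u (EuclideanSpace.single i 1)) ((contDiff_Dv hg _).differentiable (by simp)).neg x y _]
  have h2 : (fun u => - fderiv ℝ g u (EuclideanSpace.single i 1))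
      = fun u => - (fun u' => fderiv ℝ g u' (EuclideanSpace.single i 1)) u := rfl
  rw [h2, fderiv_fun_neg]
  simp

lemma infDist_frontier_le {Ω : Set E} (hΩo : IsOpen Ω) {z w : E}
    (hz : z ∈ Ω) (hw : w ∉ Ω) : infDist z (frontier Ω) ≤ dist z w := by
  set p : ℝ → E := fun t => z + t • (w - z) with hp
  have hpc : Continuous p := continuous_const.add (continuous_id.smul continuous_const)
  set S : Set ℝ := Icc (0:ℝ) 1 ∩ p ⁻¹' Ωᶜ with hS
  have hSc : IsClosed S := isClosed_Icc.inter (hΩo.isClosed_compl.preimage hpc)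
  have hp0 : p 0 = z := by simp [hp]
  have hp1 : p 1 = w := by simp [hp]
  have hS1 : (1:ℝ) ∈ S := ⟨⟨zero_le_one, le_refl 1⟩, by simp [hp1, hw]⟩
  have hbdd : BddBelow S := ⟨0, fun t ht => ht.1.1⟩
  set t₀ := sInf S with ht₀
  have ht₀S : t₀ ∈ S := hSc.csInf_mem ⟨1, hS1⟩ hbdd
  have ht₀pos : 0 < t₀ := by
    rcases lt_or_eq_of_le ht₀S.1.1 with h | h
    · exact h
    · exact absurd (by rw [← h, hp0]; exact hz) ht₀S.2
  have hmemΩ : ∀ t ∈ Ico (0:ℝ) t₀, p t ∈ Ω := by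
    intro t ht
    by_contra h
    exact absurd (csInf_le hbdd ⟨⟨ht.1, ht.2.le.trans ht₀S.1.2⟩, h⟩) (not_le.2 ht.2)
  have hfr : p t₀ ∈ frontier Ω := by
    rw [hΩo.frontier_eq]
    refine ⟨?_, ht₀S.2⟩
    have hne : (nhdsWithin t₀ (Ico 0 t₀)).NeBot := by
      rw [← mem_closure_iff_nhdsWithin_neBot, closure_Ico (ne_of_lt ht₀pos)]
      exact ⟨ht₀S.1.1, le_refl _⟩
    exact mem_closure_of_tendsto ((hpc.tendsto t₀).mono_left nhdsWithin_le_nhds)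
      (eventually_nhdsWithin_of_forall hmemΩ)
  calc infDist z (frontier Ω) ≤ dist z (p t₀) := infDist_le_dist_of_mem hfr
    _ = t₀ * dist z w := by
        simp only [hp, dist_eq_norm]
        rw [show z - (z + t₀ • (w - z)) = t₀ • (z - w) by module, norm_smul,
          Real.norm_eq_abs, abs_of_pos ht₀pos]
    _ ≤ 1 * dist z w := by
        apply mul_le_mul_of_nonneg_right ht₀S.1.2 dist_nonneg
    _ = dist z w := one_mul _

lemma ball_subset_of_le_infDist {Ω : Set E} (hΩo : IsOpen Ω) {z : E} (hz : z ∈ Ω) {R : ℝ}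
    (hR : R ≤ infDist z (frontier Ω)) : ball z R ⊆ Ω := by
  intro w hw
  by_contra h
  have := infDist_frontier_le hΩo hz h
  rw [mem_ball, dist_comm] at hw
  exact absurd (lt_of_lt_of_le hw hR) (not_lt.2 this)

lemma setIntegral_translate (h : E → ℝ) (z y : E) (r : ℝ) :
    ∫ x in ball z r, h (x - y) = ∫ x in ball (z - y) r, h x := by
  have hmp := measurePreserving_add_right (volume : Measure E) y
  have hemb : MeasurableEmbedding (· + y) :=
    (MeasurableEquiv.addRight y).measurableEmbedding
  rw [← hmp.setIntegral_preimage_emb hemb (fun x => h (x - y)) (ball z r)]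
  have hpre : (· + y) ⁻¹' ball z r = ball (z - y) r := by
    ext x
    simp only [mem_preimage, mem_ball, dist_eq_norm]
    rw [show x + y - z = x - (z - y) by module]
  rw [hpre]
  simp

lemma gfun_nonneg (k : E → ℝ) (hknn : ∀ x, 0 ≤ k x) (z y : E) (r : ℝ) :
    0 ≤ ∫ x in ball z r, k (x - y) :=
  setIntegral_nonneg measurableSet_ball fun _ _ => hknn _

lemma gfun_le_one (k : E → ℝ) (hkc : Continuous k) (hks : HasCompactSupport k)
    (hknn : ∀ x, 0 ≤ k x) (hki : ∫ x, k x = 1) (z y : E) (r : ℝ) :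
    ∫ x in ball z r, k (x - y) ≤ 1 := by
  rw [setIntegral_translate]
  calc ∫ x in ball (z - y) r, k x ≤ ∫ x, k x :=
        setIntegral_le_integral (hkc.integrable_of_hasCompactSupport hks)
          (Filter.Eventually.of_forall hknn)
    _ = 1 := hki

lemma gfun_eq_one (k : E → ℝ) (hki : ∫ x, k x = 1) {ε : ℝ}
    (hsupp : tsupport k ⊆ closedBall 0 ε) {z y : E} {r : ℝ}
    (h : dist y z + ε < r) : ∫ x in ball z r, k (x - y) = 1 := by
  rw [setIntegral_translate, setIntegral_eq_integral_of_forall_compl_eq_zero, hki]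
  intro x hx
  by_contra hkx
  have hx1 : ‖x‖ ≤ ε := by
    have := hsupp (subset_tsupport k hkx)
    simpa [mem_closedBall, dist_eq_norm] using this
  apply hx
  rw [mem_ball, dist_eq_norm]
  calc ‖x - (z - y)‖ ≤ ‖x‖ + ‖z - y‖ := norm_sub_le _ _
    _ ≤ ε + dist y z := by
        rw [show ‖z - y‖ = dist y z by rw [dist_eq_norm, norm_sub_rev]]
        linarith
    _ < r := by linarith

lemma gfun_eq_zero (k : E → ℝ) {ε : ℝ}
    (hsupp : tsupport k ⊆ closedBall 0 ε) {z y : E} {r : ℝ}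
    (h : r + ε < dist y z) : ∫ x in ball z r, k (x - y) = 0 := by
  rw [setIntegral_translate]
  apply setIntegral_eq_zero_of_forall_eq_zero
  intro x hx
  by_contra hkx
  have hx1 : ‖x‖ ≤ ε := by
    have := hsupp (subset_tsupport k hkx)
    simpa [mem_closedBall, dist_eq_norm] using this
  rw [mem_ball, dist_eq_norm] at hx
  have h1 : dist y z = ‖z - y‖ := by rw [dist_eq_norm, norm_sub_rev]
  have h2 : ‖z - y‖ = ‖x - (z - y) - x‖ := by
    rw [show x - (z - y) - x = -(z - y) by module, norm_neg]
  have h3 : ‖x - (z - y) - x‖ ≤ ‖x - (z - y)‖ + ‖x‖ := norm_sub_le _ _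
  rw [h1, h2] at h
  linarith

lemma gfun_continuous (k : E → ℝ) (hkc : Continuous k) (hks : HasCompactSupport k)
    (z : E) (r : ℝ) : Continuous (fun y => ∫ x in ball z r, k (x - y)) := by
  have hind : Integrable ((ball z r).indicator (fun _ => (1:ℝ))) volume := by
    rw [integrable_indicator_iff measurableSet_ball]
    exact integrableOn_const measure_ball_lt_top.ne
  have hk2 : HasCompactSupport (fun w => k (-w)) := hks.comp_homeomorph (Homeomorph.neg E)
  have hcont := hk2.continuous_convolution_right L hind.locallyIntegrable
    (hkc.comp continuous_neg)
  have heq : (fun y => ∫ x in ball z r, k (x - y))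
      = ((ball z r).indicator (fun _ => (1:ℝ))) ⋆[L] (fun w => k (-w)) := by
    funext y
    rw [← integral_indicator measurableSet_ball]
    simp only [convolution_def, ContinuousLinearMap.mul_apply', neg_sub]
    congr 1
    funext x
    by_cases hx : x ∈ ball z r <;> simp [hx]
  rw [heq]
  exact hcont

end MollAux

open MollAux in
/-- Proposition 3.2: the mollified Laplacian converges to the μ-Laplacian on balls. -/
theorem mollified_laplacian_tendsto {d : ℕ} (hd : 1 ≤ d)
    (Ω : Set (EuclideanSpace ℝ (Fin d)))
    (hΩo : IsOpen Ω) (hΩconn : IsConnected Ω) (hΩb : Bornology.IsBounded Ω)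
    (μ : Measure (EuclideanSpace ℝ (Fin d))) [IsFiniteMeasure μ]
    (hsupp : μ (closure Ω)ᶜ = 0) (hμΩ : 0 < μ Ω)
    (uT : EuclideanSpace ℝ (Fin d) → ℝ) (huT : Integrable uT volume)
    (huT0 : ∀ x, x ∉ Ω → uT x = 0)
    (f : EuclideanSpace ℝ (Fin d) → ℝ) (hf : IntegrableOn f Ω μ)
    (hf0 : ∀ᵐ x ∂(μ.restrict Ω), 0 ≤ f x)
    (heq : ∀ φ : EuclideanSpace ℝ (Fin d) → ℝ, ContDiff ℝ (⊤ : ℕ∞) φ →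
      HasCompactSupport φ → tsupport φ ⊆ Ω →
      ∫ x, uT x * lapl φ x = ∫ x in Ω, f x * φ x ∂μ)
    (η : ℝ → EuclideanSpace ℝ (Fin d) → ℝ)
    (hηsmooth : ∀ ε : ℝ, 0 < ε → ContDiff ℝ (⊤ : ℕ∞) (η ε))
    (hηpos : ∀ ε : ℝ, 0 < ε → ∀ x, 0 ≤ η ε x)
    (hηsupp : ∀ ε : ℝ, 0 < ε → tsupport (η ε) ⊆ closedBall 0 ε)
    (hηint : ∀ ε : ℝ, 0 < ε → ∫ x, η ε x = 1) :
    ∀ z ∈ Ω, ∀ r : ℝ, 0 < r → r < infDist z (frontier Ω) →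
      μ (sphere z r) = 0 →
      Tendsto (fun ε : ℝ => ∫ x in ball z r, lapl (fun w => ∫ y, η ε (w - y) * uT y) x)
        (nhdsWithin 0 (Set.Ioi 0))
        (nhds (∫ x in ball z r, f x ∂μ)) := by
  intro z hz r hr hrd hsph
  classical
  set δ := infDist z (frontier Ω) - r with hδdef
  have hδ : 0 < δ := by rw [hδdef]; linarith
  have hcsf : ∀ ε : ℝ, 0 < ε → HasCompactSupport (η ε) := fun ε hε =>
    (isCompact_closedBall 0 ε).of_isClosed_subset (isClosed_tsupport _) (hηsupp ε hε)
  have hnull : μ (ball z r \ Ω) = 0 := by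
    apply measure_mono_null _ hsupp
    intro y hy hyc
    have hyf : y ∈ frontier Ω := by rw [hΩo.frontier_eq]; exact ⟨hyc, hy.2⟩
    have h1 : infDist z (frontier Ω) ≤ dist z y := infDist_le_dist_of_mem hyf
    have h2 : dist z y < r := by rw [dist_comm]; exact mem_ball.1 hy.1
    linarith
  set gE : ℝ → EuclideanSpace ℝ (Fin d) → ℝ := fun ε y => ∫ x in ball z r, η ε (x - y) with hgE
  -- Step 1: key identity for small ε
  have hkey : ∀ ε ∈ Set.Ioo (0:ℝ) δ,
      (∫ x in ball z r, lapl (fun w => ∫ y, η ε (w - y) * uT y) x)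
        = ∫ y in Ω, f y * gE ε y ∂μ := by
    intro ε hε
    obtain ⟨hε0, hεδ⟩ := hε
    have hsm := hηsmooth ε hε0
    have hcs := hcsf ε hε0
    have hloc := huT.locallyIntegrable
    have hpt : ∀ x ∈ ball z r,
        lapl (fun w => ∫ y, η ε (w - y) * uT y) x = ∫ y in Ω, f y * η ε (x - y) ∂μ := by
      intro x hx
      have hconv_eq : (fun w => ∫ y, η ε (w - y) * uT y)
          = uT ⋆[ContinuousLinearMap.mul ℝ ℝ] η ε := by
        funext w
        rw [convolution_def]
        simp only [ContinuousLinearMap.mul_apply']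
        exact integral_congr_ae (.of_forall fun y => mul_comm _ _)
      set φ : EuclideanSpace ℝ (Fin d) → ℝ := fun w => η ε (x - w) with hφ
      have hφs : ContDiff ℝ (⊤ : ℕ∞) φ := hsm.comp (contDiff_const.sub contDiff_id)
      have hφsupp : tsupport φ ⊆ closedBall x ε := by
        apply closure_minimal _ isClosed_closedBall
        intro w hw
        have h1 : x - w ∈ tsupport (η ε) := subset_tsupport _ hw
        have h2 := hηsupp ε hε0 h1
        simp only [mem_closedBall, dist_eq_norm, sub_zero] at h2 ⊢
        rwa [norm_sub_rev]
      have hcball : closedBall x ε ⊆ Ω := by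
        intro w hw
        apply ball_subset_of_le_infDist hΩo hz (le_refl (infDist z (frontier Ω)))
        rw [mem_ball]
        have h1 : dist w x ≤ ε := mem_closedBall.1 hw
        have h2 : dist x z < r := mem_ball.1 hx
        calc dist w z ≤ dist w x + dist x z := dist_triangle _ _ _
          _ < ε + r := by linarith
          _ < δ + r := by linarith
          _ = infDist z (frontier Ω) := by rw [hδdef]; ring
      have hφΩ : tsupport φ ⊆ Ω := hφsupp.trans hcball
      have hφc : HasCompactSupport φ :=
        (isCompact_closedBall x ε).of_isClosed_subset (isClosed_tsupport _) hφsupp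
      have h2 : ∀ y, lapl φ y = lapl (η ε) (x - y) := fun y => lapl_reflect hsm x y
      rw [hconv_eq, lapl_conv uT hloc hsm hcs x]
      calc (∫ y, uT y * lapl (η ε) (x - y)) = ∫ y, uT y * lapl φ y :=
            integral_congr_ae (.of_forall fun y => by simp only [h2 y])
        _ = ∫ y in Ω, f y * φ y ∂μ := heq φ hφs hφc hφΩ
        _ = ∫ y in Ω, f y * η ε (x - y) ∂μ := rfl
    rw [setIntegral_congr_fun measurableSet_ball hpt]
    -- Fubini
    have hηcont := hsm.continuous
    obtain ⟨C, hC⟩ := hcs.exists_bound_of_continuous hηcont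
    have hfin1 : IsFiniteMeasure ((volume : Measure (EuclideanSpace ℝ (Fin d))).restrict (ball z r)) :=
      ⟨by rw [Measure.restrict_apply_univ]; exact measure_ball_lt_top⟩
    have hmeasF : AEStronglyMeasurable (fun p : EuclideanSpace ℝ (Fin d) × EuclideanSpace ℝ (Fin d) => f p.2 * η ε (p.1 - p.2))
        (((volume : Measure (EuclideanSpace ℝ (Fin d))).restrict (ball z r)).prod (μ.restrict Ω)) :=
      (hf.aestronglyMeasurable.comp_snd).mul
        ((hηcont.comp (continuous_fst.sub continuous_snd)).aestronglyMeasurable)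
    have hint1 : ∀ x : EuclideanSpace ℝ (Fin d), Integrable (fun y => f y * η ε (x - y)) (μ.restrict Ω) := by
      intro x
      have h := Integrable.bdd_mul hf
        ((hηcont.comp (continuous_const.sub continuous_id)).aestronglyMeasurable)
        (c := C) (.of_forall fun y => hC (x - y))
      simpa [mul_comm] using h
    have hFint : Integrable (fun p : EuclideanSpace ℝ (Fin d) × EuclideanSpace ℝ (Fin d) => f p.2 * η ε (p.1 - p.2))
        (((volume : Measure (EuclideanSpace ℝ (Fin d))).restrict (ball z r)).prod (μ.restrict Ω)) := by
      rw [integrable_prod_iff hmeasF]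
      constructor
      · exact .of_forall fun x => hint1 x
      · have hM : ∀ x : EuclideanSpace ℝ (Fin d), (∫ y, ‖f y * η ε (x - y)‖ ∂(μ.restrict Ω))
            ≤ C * ∫ y, ‖f y‖ ∂(μ.restrict Ω) := by
          intro x
          rw [← integral_const_mul]
          apply integral_mono (hint1 x).norm (hf.norm.const_mul C)
          intro y
          simp only [norm_mul]
          calc ‖f y‖ * ‖η ε (x - y)‖ ≤ ‖f y‖ * C :=
                mul_le_mul_of_nonneg_left (hC _) (norm_nonneg _)
            _ = C * ‖f y‖ := mul_comm _ _
        apply Integrable.mono'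
          (g := fun _ : EuclideanSpace ℝ (Fin d) => C * ∫ y, ‖f y‖ ∂(μ.restrict Ω)) (integrable_const _)
          (hmeasF.norm.integral_prod_right')
        apply Filter.Eventually.of_forall
        intro x
        rw [Real.norm_eq_abs, abs_of_nonneg (integral_nonneg fun y => norm_nonneg _)]
        exact hM x
    have hswap := integral_integral_swap
      (f := fun (x : EuclideanSpace ℝ (Fin d)) (y : EuclideanSpace ℝ (Fin d)) => f y * η ε (x - y)) hFint
    rw [hswap]
    refine integral_congr_ae (.of_forall fun y => ?_)
    simp only [integral_const_mul]
    rfl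
  -- Step 2: the limit
  have hsph' : (μ.restrict Ω) (sphere z r) = 0 := by
    rw [Measure.restrict_apply isClosed_sphere.measurableSet]
    exact measure_mono_null Set.inter_subset_left hsph
  set G : EuclideanSpace ℝ (Fin d) → ℝ := fun y => f y * (ball z r).indicator (fun _ => (1:ℝ)) y with hG
  have htarget : ∫ y in Ω, G y ∂μ = ∫ x in ball z r, f x ∂μ := by
    have h1 : ∀ y, G y = (ball z r).indicator f y := by
      intro y
      by_cases h : y ∈ ball z r <;> simp [hG, h]
    have hae : (Ω ∩ ball z r : Set (EuclideanSpace ℝ (Fin d))) =ᵐ[μ] (ball z r : Set (EuclideanSpace ℝ (Fin d))) := by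
      rw [MeasureTheory.ae_eq_set]
      constructor
      · have : (Ω ∩ ball z r) \ ball z r = (∅ : Set (EuclideanSpace ℝ (Fin d))) := by
          ext y; simp (config := {contextual := true}) [Set.mem_diff]
        rw [this]; exact measure_empty
      · exact measure_mono_null (fun y hy => (by exact ⟨hy.1, fun h => hy.2 ⟨h, hy.1⟩⟩)) hnull
    calc ∫ y in Ω, G y ∂μ = ∫ y in Ω, (ball z r).indicator f y ∂μ :=
          integral_congr_ae (.of_forall fun y => h1 y)
      _ = ∫ y in Ω ∩ ball z r, f y ∂μ := setIntegral_indicator measurableSet_ball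
      _ = ∫ y in ball z r, f y ∂μ := setIntegral_congr_set hae
  have hmain : Tendsto (fun ε => ∫ y in Ω, f y * gE ε y ∂μ) (nhdsWithin 0 (Set.Ioi 0))
      (nhds (∫ y in Ω, G y ∂μ)) := by
    apply tendsto_integral_filter_of_dominated_convergence (fun y => ‖f y‖)
    · apply eventually_nhdsWithin_of_forall
      intro ε hε
      exact hf.aestronglyMeasurable.mul
        (gfun_continuous (η ε) (hηsmooth ε hε).continuous (hcsf ε hε) z r).aestronglyMeasurable
    · apply eventually_nhdsWithin_of_forall
      intro ε hε
      apply Filter.Eventually.of_forall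
      intro y
      rw [norm_mul]
      have h0 : 0 ≤ gE ε y := gfun_nonneg (η ε) (hηpos ε hε) z y r
      have h1 : ‖gE ε y‖ ≤ 1 := by
        rw [Real.norm_eq_abs, abs_of_nonneg h0]
        exact gfun_le_one (η ε) (hηsmooth ε hε).continuous (hcsf ε hε) (hηpos ε hε)
          (hηint ε hε) z y r
      calc ‖f y‖ * ‖gE ε y‖ ≤ ‖f y‖ * 1 := mul_le_mul_of_nonneg_left h1 (norm_nonneg _)
        _ = ‖f y‖ := mul_one _
    · exact hf.norm
    · have hns : ∀ᵐ y ∂(μ.restrict Ω), y ∉ sphere z r := by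
        rw [ae_iff]
        simp only [not_not, Set.setOf_mem_eq]; exact hsph'
      filter_upwards [hns] with y hy
      have hyne : dist y z ≠ r := fun h => hy (mem_sphere.2 h)
      rcases lt_or_gt_of_ne hyne with hlt | hgt
      · have hev : ∀ᶠ ε in nhdsWithin (0:ℝ) (Set.Ioi 0), f y * gE ε y = G y := by
          filter_upwards [Ioo_mem_nhdsGT
            (show (0:ℝ) < r - dist y z by linarith)] with ε hε
          have h1 : gE ε y = 1 := gfun_eq_one (η ε) (hηint ε hε.1) (hηsupp ε hε.1)
            (by linarith [hε.2])
          have h2 : y ∈ ball z r := mem_ball.2 hlt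
          simp [h1, hG, h2]
        exact tendsto_const_nhds.congr' (hev.mono fun ε h => h.symm)
      · have hev : ∀ᶠ ε in nhdsWithin (0:ℝ) (Set.Ioi 0), f y * gE ε y = G y := by
          filter_upwards [Ioo_mem_nhdsGT
            (show (0:ℝ) < dist y z - r by linarith)] with ε hε
          have h1 : gE ε y = 0 := gfun_eq_zero (η ε) (hηsupp ε hε.1)
            (by linarith [hε.2])
          have h2 : y ∉ ball z r := fun h => absurd (mem_ball.1 h) (by linarith)
          simp [h1, hG, h2]
        exact tendsto_const_nhds.congr' (hev.mono fun ε h => h.symm)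
  rw [← htarget]
  apply hmain.congr'
  filter_upwards [Ioo_mem_nhdsGT hδ] with ε hε
  exact (hkey ε hε).symm
end

section
/- Proposition 5.3 for d = 2 (boundedness of the Green operator): Let Ω be a bounded domain in ℝ² and μ a positive finite Borel measure on ℝ² with supp(μ) ⊆ closure(Ω) and μ(Ω) > 0. Assume dim_∞(μ) > 0. Let h : closure(Ω) × closure(Ω) → ℝ be continuous and let G(x,y) := −(1/(2π)) ln|x−y| + h(x,y) for x ≠ y. Then for every f ∈ L²(Ω,μ) there exists a constant M > 0 such that for every x ∈ Ω, the function y ↦ G(x,y) f(y) is μ-integrable on Ω and |∫_Ω G(x,y) f(y) dμ(y)| ≤ M. -/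
open MeasureTheory Metric Filter

/-- The topological support of a measure: points all of whose neighborhoods have
positive measure. -/
def measSupport (μ : Measure (EuclideanSpace ℝ (Fin 2))) :
    Set (EuclideanSpace ℝ (Fin 2)) :=
  {x | ∀ ε : ℝ, 0 < ε → 0 < μ (ball x ε)}

/-- The lower `L^∞`-dimension of a measure:
`liminf_{δ→0⁺} ln( sup_{x ∈ supp(μ)} μ(B̄_δ(x)) ) / ln δ`. -/
noncomputable def lowerLinftyDim (μ : Measure (EuclideanSpace ℝ (Fin 2))) : ℝ :=
  Filter.liminf
    (fun δ : ℝ =>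
      Real.log ((⨆ x ∈ measSupport μ, μ (closedBall x δ)).toReal) / Real.log δ)
    (nhdsWithin 0 (Set.Ioi 0))

open scoped ENNReal NNReal Topology
open Real Set

/-!
Since `dim_∞ μ > 0`, the measure is Frostman: `μ (closedBall z δ) ≤ C δ ^ s` for some `s > 0`
and all small `δ`, uniformly in the centre `z` (a ball meeting the support lies in a ball of
twice the radius centred in the support). Cutting the space into dyadic shells around `x`, the
Riesz potentials `∫ |x - y| ^ (-p) dμ(y)`, `p < s`, are then bounded uniformly in `x`. As
`|log d| ≤ |log D| + d ^ (-t) / t` for `d ≤ D`, the kernel `G x` lies in `L²(μ|Ω)` with norm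
bounded uniformly in `x ∈ Ω`, and Cauchy–Schwarz bounds the Green operator.
-/

theorem exists_mem_Ioc_mul_inv_two_pow {d r : ℝ} (hd : 0 < d) (hdr : d ≤ r) :
    ∃ k : ℕ, d ∈ Ioc (r * 2⁻¹ ^ k / 2) (r * 2⁻¹ ^ k) := by
  obtain ⟨k, hk, hk'⟩ := exists_nat_pow_near ((one_le_div hd).2 hdr) one_lt_two
  refine ⟨k, ?_, ?_⟩
  · rw [inv_pow, ← div_eq_mul_inv, div_div, ← pow_succ, div_lt_iff₀ (by positivity)]
    exact mul_comm d _ ▸ (div_lt_iff₀ hd).1 hk'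
  · rw [inv_pow, ← div_eq_mul_inv, le_div_iff₀ (by positivity), mul_comm]
    exact (le_div_iff₀ hd).1 hk

theorem rpow_neg_div_two_mul_rpow {u : ℝ} (hu : 0 < u) (p s : ℝ) :
    (u / 2) ^ (-p) * u ^ s = 2 ^ p * u ^ (s - p) := by
  rw [Real.div_rpow hu.le zero_le_two, Real.rpow_neg zero_le_two, div_inv_eq_mul,
    mul_right_comm, ← Real.rpow_add hu, neg_add_eq_sub, mul_comm]

theorem abs_log_le_abs_log_add_rpow_neg {d D t : ℝ} (hd : 0 ≤ d) (hdD : d ≤ D) (ht : 0 < t) :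
    |log d| ≤ |log D| + t⁻¹ * d ^ (-t) := by
  have hpow : 0 ≤ t⁻¹ * d ^ (-t) := by positivity
  rcases hd.eq_or_lt with rfl | hd
  · simpa using add_nonneg (abs_nonneg (log D)) hpow
  rw [abs_le]
  constructor
  · have := Real.log_le_rpow_div (inv_nonneg.2 hd.le) ht
    rw [Real.log_inv, Real.inv_rpow hd.le, ← Real.rpow_neg hd.le, div_eq_inv_mul] at this
    linarith [abs_nonneg (log D)]
  · linarith [(Real.log_le_log hd hdD).trans (le_abs_self _)]

theorem le_rpow_of_le_log_div_log {a δ s : ℝ} (ha : 0 ≤ a) (hδ : δ ∈ Ioo 0 1)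
    (h : s ≤ log a / log δ) : a ≤ δ ^ s := by
  rcases ha.eq_or_lt with rfl | ha
  · exact rpow_nonneg hδ.1.le s
  rw [Real.le_rpow_iff_log_le ha hδ.1]
  exact (le_div_iff_of_neg (Real.log_neg hδ.1 hδ.2)).1 h

theorem exists_pos_eventually_le_of_liminf_pos {α : Type*} {l : Filter α} {u : α → ℝ}
    (h : 0 < liminf u l) : ∃ s > 0, ∀ᶠ a in l, s ≤ u a := by
  rw [liminf_eq] at h
  -- `sSup ∅ = 0` in `ℝ`, so a positive liminf has some eventual lower bound
  have hne : {a | ∀ᶠ n in l, a ≤ u n}.Nonempty := by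
    by_contra hne
    simp [not_nonempty_iff_eq_empty.1 hne] at h
  obtain ⟨s, hs, hpos⟩ := exists_lt_of_lt_csSup hne h
  exact ⟨s, hpos, hs⟩

theorem integrable_mul_and_abs_integral_le {α : Type*} [MeasurableSpace α] {μ : Measure α}
    {f g : α → ℝ} (hf : MemLp f 2 μ) (hg : MemLp g 2 μ) :
    Integrable (fun y => f y * g y) μ ∧
      |∫ y, f y * g y ∂μ| ≤ (eLpNorm f 2 μ * eLpNorm g 2 μ).toReal := by
  refine ⟨memLp_one_iff_integrable.1 (hg.mul' hf), ?_⟩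
  calc |∫ y, f y * g y ∂μ| ≤ (eLpNorm (fun y => f y * g y) 1 μ).toReal := by
        rw [← Real.norm_eq_abs, eLpNorm_one_eq_lintegral_enorm]
        simpa only [ofReal_norm] using norm_integral_le_lintegral_norm (μ := μ) fun y => f y * g y
    _ ≤ _ := by
      refine ENNReal.toReal_mono (by finiteness [hf.2, hg.2]) ?_
      simpa using eLpNorm_le_eLpNorm_mul_eLpNorm'_of_norm (r := 1) hf.1 hg.1 (· * ·) 1
          (.of_forall fun _ => by simp [norm_mul])

section Frostman

variable {X : Type*} [PseudoMetricSpace X] {p s r : ℝ}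

theorem ofReal_rpow_neg_dist_le_tsum (hp : 0 < p) (hr : 0 < r) (x y : X) :
    ENNReal.ofReal (dist x y ^ (-p)) ≤ ENNReal.ofReal (r ^ (-p)) +
      ∑' k : ℕ, (closedBall x (r * 2⁻¹ ^ k)).indicator
        (fun _ => ENNReal.ofReal ((r * 2⁻¹ ^ k / 2) ^ (-p))) y := by
  rcases (dist_nonneg (x := x) (y := y)).eq_or_lt with hxy | hxy
  · -- `0 ^ (-p) = 0` for real powers
    simp [← hxy, Real.zero_rpow (neg_ne_zero.2 hp.ne')]
  rcases le_or_gt (dist x y) r with hyr | hyr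
  · obtain ⟨k, hk⟩ := exists_mem_Ioc_mul_inv_two_pow hxy hyr
    have hy : y ∈ closedBall x (r * 2⁻¹ ^ k) := by rw [mem_closedBall, dist_comm]; exact hk.2
    calc ENNReal.ofReal (dist x y ^ (-p))
        ≤ ENNReal.ofReal ((r * 2⁻¹ ^ k / 2) ^ (-p)) := ENNReal.ofReal_le_ofReal <|
          Real.rpow_le_rpow_of_nonpos (by positivity) hk.1.le (neg_nonpos.2 hp.le)
      _ = (closedBall x (r * 2⁻¹ ^ k)).indicator
            (fun _ => ENNReal.ofReal ((r * 2⁻¹ ^ k / 2) ^ (-p))) y := by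
          rw [indicator_of_mem hy]
      _ ≤ _ := (ENNReal.le_tsum k).trans le_add_self
  · exact (ENNReal.ofReal_le_ofReal <|
      Real.rpow_le_rpow_of_nonpos hr hyr.le (neg_nonpos.2 hp.le)).trans le_self_add

variable [MeasurableSpace X]

def IsFrostman (μ : Measure X) (s : ℝ) (C : ℝ≥0) (r : ℝ) : Prop :=
  ∀ z δ, 0 < δ → δ ≤ r → μ (closedBall z δ) ≤ C * ENNReal.ofReal (δ ^ s)

variable {μ ν : Measure X} {C : ℝ≥0}

theorem IsFrostman.mono (hμ : IsFrostman μ s C r) (hνμ : ν ≤ μ) : IsFrostman ν s C r :=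
  fun z δ hδ hδr => (hνμ _).trans (hμ z δ hδ hδr)

theorem IsFrostman.measure_singleton (hμ : IsFrostman μ s C r) (hs : 0 < s) (hr : 0 < r)
    (x : X) : μ {x} = 0 := by
  have hpow : Tendsto (fun δ : ℝ => δ ^ s) (𝓝[>] 0) (𝓝 0) := by
    simpa [Real.zero_rpow hs.ne'] using
      (Real.continuousAt_rpow_const 0 s (Or.inr hs.le)).tendsto.mono_left nhdsWithin_le_nhds
  have hlim : Tendsto (fun δ : ℝ => C * ENNReal.ofReal (δ ^ s)) (𝓝[>] 0) (𝓝 0) := by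
    simpa using ENNReal.Tendsto.const_mul (ENNReal.tendsto_ofReal hpow) (.inr ENNReal.coe_ne_top)
  refine le_antisymm (ge_of_tendsto hlim ?_) zero_le
  filter_upwards [Ioc_mem_nhdsGT hr] with δ hδ
  exact (measure_mono (singleton_subset_iff.2 (mem_closedBall_self hδ.1.le))).trans
    (hμ x δ hδ.1 hδ.2)

theorem measure_closedBall_le_iSup_support [HereditarilyLindelofSpace X] (z : X) (δ : ℝ) :
    μ (closedBall z δ) ≤ ⨆ x ∈ μ.support, μ (closedBall x (2 * δ)) := by
  by_cases h : (closedBall z δ ∩ μ.support).Nonempty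
  · obtain ⟨w, hwz, hw⟩ := h
    refine (measure_mono (closedBall_subset_closedBall' ?_)).trans (le_iSup₂_of_le w hw le_rfl)
    linarith [mem_closedBall'.1 hwz]
  · rw [measure_mono_null (fun y hy hys => h ⟨y, hy, hys⟩) μ.measure_compl_support]
    exact zero_le

variable [OpensMeasurableSpace X]

theorem IsFrostman.lintegral_rpow_neg_dist_le (hμ : IsFrostman μ s C r) (hp : 0 < p) (hr : 0 < r)
    (x : X) :
    ∫⁻ y, ENNReal.ofReal (dist x y ^ (-p)) ∂μ ≤ ENNReal.ofReal (r ^ (-p)) * μ univ +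
      C * ENNReal.ofReal (2 ^ p * r ^ (s - p)) * (1 - ENNReal.ofReal (2⁻¹ ^ (s - p)))⁻¹ := by
  have hball : ∀ k : ℕ,
      ENNReal.ofReal ((r * 2⁻¹ ^ k / 2) ^ (-p)) * μ (closedBall x (r * 2⁻¹ ^ k)) ≤
        C * ENNReal.ofReal (2 ^ p * r ^ (s - p)) * ENNReal.ofReal (2⁻¹ ^ (s - p)) ^ k := by
    intro k
    set u := r * 2⁻¹ ^ k with hu
    have hu0 : 0 < u := by positivity
    calc ENNReal.ofReal ((u / 2) ^ (-p)) * μ (closedBall x u)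
        ≤ ENNReal.ofReal ((u / 2) ^ (-p)) * (C * ENNReal.ofReal (u ^ s)) := by
          gcongr
          exact hμ x u hu0 (mul_le_of_le_one_right hr.le (pow_le_one₀ (by norm_num) (by norm_num)))
      _ = C * ENNReal.ofReal (2 ^ p * r ^ (s - p) * (2⁻¹ ^ (s - p)) ^ k) := by
          rw [mul_left_comm, ← ENNReal.ofReal_mul (by positivity), rpow_neg_div_two_mul_rpow hu0,
            hu, Real.mul_rpow hr.le (by positivity), Real.rpow_pow_comm (by norm_num), mul_assoc]
      _ = _ := by
          rw [ENNReal.ofReal_mul (by positivity), ENNReal.ofReal_pow (by positivity), mul_assoc]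
  calc ∫⁻ y, ENNReal.ofReal (dist x y ^ (-p)) ∂μ
      ≤ ∫⁻ y, (ENNReal.ofReal (r ^ (-p)) + ∑' k : ℕ, (closedBall x (r * 2⁻¹ ^ k)).indicator
          (fun _ => ENNReal.ofReal ((r * 2⁻¹ ^ k / 2) ^ (-p))) y) ∂μ :=
        lintegral_mono fun y => ofReal_rpow_neg_dist_le_tsum hp hr x y
    _ = ENNReal.ofReal (r ^ (-p)) * μ univ + ∑' k : ℕ,
          ENNReal.ofReal ((r * 2⁻¹ ^ k / 2) ^ (-p)) * μ (closedBall x (r * 2⁻¹ ^ k)) := by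
        rw [lintegral_add_left measurable_const, lintegral_const,
          lintegral_tsum fun k =>
            (measurable_const.indicator measurableSet_closedBall).aemeasurable]
        simp_rw [lintegral_indicator_const measurableSet_closedBall]
    _ ≤ _ := by
        grw [ENNReal.tsum_le_tsum hball, ENNReal.tsum_mul_left, ENNReal.tsum_geometric]

theorem IsFrostman.exists_lintegral_rpow_neg_dist_le [IsFiniteMeasure μ]
    (hμ : IsFrostman μ s C r) (hp : 0 < p) (hps : p < s) (hr : 0 < r) :
    ∃ K < ∞, ∀ x, ∫⁻ y, ENNReal.ofReal (dist x y ^ (-p)) ∂μ ≤ K := by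
  have hq : ENNReal.ofReal (2⁻¹ ^ (s - p)) < 1 :=
    ENNReal.ofReal_lt_one.2 (Real.rpow_lt_one (by norm_num) (by norm_num) (sub_pos.2 hps))
  refine ⟨_, ?_, hμ.lintegral_rpow_neg_dist_le hp hr⟩
  have := ENNReal.inv_ne_top.2 (tsub_pos_of_lt hq).ne'
  finiteness

theorem IsFrostman.exists_eLpNorm_rpow_neg_dist_le [IsFiniteMeasure μ]
    (hμ : IsFrostman μ s C r) (hr : 0 < r) {q : ℝ≥0∞} (hq0 : q ≠ 0) (hq_top : q ≠ ∞) {t : ℝ}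
    (ht : 0 < t) (hts : t * q.toReal < s) :
    ∃ K < ∞, ∀ x, eLpNorm (fun y => dist x y ^ (-t)) q μ ≤ K := by
  have hq_pos : 0 < q.toReal := ENNReal.toReal_pos hq0 hq_top
  obtain ⟨K, hK, hKx⟩ := hμ.exists_lintegral_rpow_neg_dist_le (by positivity) hts hr
  refine ⟨K ^ (1 / q.toReal), ENNReal.rpow_lt_top_of_nonneg (by positivity) hK.ne, fun x => ?_⟩
  rw [eLpNorm_eq_lintegral_rpow_enorm_toReal hq0 hq_top]
  gcongr
  convert hKx x using 3 with y
  rw [Real.enorm_of_nonneg (by positivity), ENNReal.ofReal_rpow_of_nonneg (by positivity) hq_pos.le,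
    ← Real.rpow_mul dist_nonneg, neg_mul]

theorem IsFrostman.exists_eLpNorm_le_of_abs_le_log_dist [IsFiniteMeasure μ]
    (hμ : IsFrostman μ s C r) (hs : 0 < s) (hr : 0 < r) {q : ℝ≥0∞} (hq : 1 ≤ q) (hq_top : q ≠ ∞)
    {S : Set X} (hSb : Bornology.IsBounded S) (hS : μ Sᶜ = 0) {k : X → X → ℝ}
    {c H : ℝ} (hc : 0 ≤ c) (hk : ∀ x ∈ S, ∀ y ∈ S, x ≠ y → |k x y| ≤ c * |log (dist x y)| + H) :
    ∃ K < ∞, ∀ x ∈ S, eLpNorm (k x) q μ ≤ K := by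
  obtain ⟨D, hD⟩ := isBounded_iff.1 hSb
  have hq0 : q ≠ 0 := (zero_lt_one.trans_le hq).ne'
  have hq_pos : 0 < q.toReal := ENNReal.toReal_pos hq0 hq_top
  set t := s / (2 * q.toReal)
  have ht : 0 < t := by positivity
  have hts : t * q.toReal < s := by
    rw [div_mul_eq_mul_div, mul_comm 2, ← div_div, mul_div_cancel_right₀ _ hq_pos.ne']
    linarith
  obtain ⟨K, hK, hKx⟩ := hμ.exists_eLpNorm_rpow_neg_dist_le hr hq0 hq_top ht hts
  refine ⟨‖c * |log D| + H‖ₑ * μ univ ^ (1 / q.toReal) + ‖c * t⁻¹‖ₑ * K, by finiteness,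
    fun x hx => ?_⟩
  have hbound : ∀ᵐ y ∂μ, ‖k x y‖ ≤ (c * |log D| + H) + c * t⁻¹ * dist x y ^ (-t) := by
    filter_upwards [measure_eq_zero_iff_ae_notMem.1 hS,
      measure_eq_zero_iff_ae_notMem.1 (hμ.measure_singleton hs hr x)] with y hyS hyx
    have hxy : x ≠ y := fun h => hyx (h ▸ rfl)
    rw [Set.notMem_compl_iff] at hyS
    calc ‖k x y‖ ≤ c * |log (dist x y)| + H := hk x hx y hyS hxy
      _ ≤ c * (|log D| + t⁻¹ * dist x y ^ (-t)) + H := by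
          gcongr
          exact abs_log_le_abs_log_add_rpow_neg dist_nonneg (hD hx hyS) ht
      _ = _ := by ring
  calc eLpNorm (k x) q μ
      ≤ eLpNorm (fun y => (c * |log D| + H) + c * t⁻¹ * dist x y ^ (-t)) q μ :=
        eLpNorm_mono_ae_real hbound
    _ ≤ eLpNorm (fun _ => c * |log D| + H) q μ
          + eLpNorm (fun y => c * t⁻¹ * dist x y ^ (-t)) q μ :=
        eLpNorm_add_le aestronglyMeasurable_const
          (((continuous_const.dist continuous_id).measurable.pow_const _).const_mul _
            |>.aestronglyMeasurable) hq
    _ ≤ _ := by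
        rw [eLpNorm_const' _ hq0 hq_top]
        grw [← hKx x]
        gcongr
        exact (eLpNorm_const_smul (c * t⁻¹) (fun y => dist x y ^ (-t)) q μ).le

theorem aestronglyMeasurable_of_eq_log_dist_add {x : X} (hx : μ {x} = 0)
    {g h : X → ℝ} (hh : AEStronglyMeasurable h μ) (a : ℝ)
    (hg : ∀ y, x ≠ y → g y = a * log (dist x y) + h y) : AEStronglyMeasurable g μ := by
  refine AEStronglyMeasurable.congr (f := fun y => a * log (dist x y) + h y) ?_ ?_
  · exact (((Real.measurable_log.comp (continuous_const.dist continuous_id).measurable).const_mul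
      a).aestronglyMeasurable).add hh
  · filter_upwards [measure_eq_zero_iff_ae_notMem.1 hx] with y hy
    exact (hg y fun hxy => hy (hxy ▸ rfl)).symm

end Frostman

theorem measSupport_eq_support (μ : Measure (EuclideanSpace ℝ (Fin 2))) :
    measSupport μ = μ.support := by
  ext x
  exact nhds_basis_ball.mem_measureSupport.symm

theorem exists_isFrostman_of_lowerLinftyDim_pos {μ : Measure (EuclideanSpace ℝ (Fin 2))}
    [IsFiniteMeasure μ] (hμ : 0 < lowerLinftyDim μ) :
    ∃ s > 0, ∃ (C : ℝ≥0) (r : ℝ), 0 < r ∧ IsFrostman μ s C r := by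
  obtain ⟨s, hs, hev⟩ := exists_pos_eventually_le_of_liminf_pos hμ
  obtain ⟨δ₀, hδ₀ : 0 < δ₀, hsub⟩ := mem_nhdsGT_iff_exists_Ioo_subset.1 hev
  refine ⟨s, hs, ((2 : ℝ) ^ s).toNNReal, min δ₀ 1 / 4, by positivity, fun z δ hδ hδr => ?_⟩
  have h2δ : 2 * δ < min δ₀ 1 := by linarith [lt_min hδ₀ one_pos]
  have hfin : (⨆ x ∈ measSupport μ, μ (closedBall x (2 * δ))) ≠ ∞ :=
    ne_top_of_le_ne_top (measure_ne_top μ univ) (iSup₂_le fun _ _ => measure_mono (subset_univ _))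
  calc μ (closedBall z δ) ≤ ⨆ x ∈ measSupport μ, μ (closedBall x (2 * δ)) := by
        rw [measSupport_eq_support]
        exact measure_closedBall_le_iSup_support z δ
    _ = ENNReal.ofReal (⨆ x ∈ measSupport μ, μ (closedBall x (2 * δ))).toReal :=
        (ENNReal.ofReal_toReal hfin).symm
    _ ≤ ENNReal.ofReal ((2 * δ) ^ s) := ENNReal.ofReal_le_ofReal <|
        le_rpow_of_le_log_div_log ENNReal.toReal_nonneg
          ⟨by positivity, h2δ.trans_le (min_le_right _ _)⟩
          (hsub ⟨by positivity, h2δ.trans_le (min_le_left _ _)⟩)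
    _ = _ := by rw [Real.mul_rpow zero_le_two hδ.le, ENNReal.ofReal_mul (by positivity)]; rfl

theorem green_operator_bounded_general
    (Ω : Set (EuclideanSpace ℝ (Fin 2)))
    (hΩo : IsOpen Ω) (hΩb : Bornology.IsBounded Ω)
    (μ : Measure (EuclideanSpace ℝ (Fin 2))) [IsFiniteMeasure μ]
    (hdim : 0 < lowerLinftyDim μ)
    (h : EuclideanSpace ℝ (Fin 2) → EuclideanSpace ℝ (Fin 2) → ℝ)
    (hh : ContinuousOn (fun p : EuclideanSpace ℝ (Fin 2) × EuclideanSpace ℝ (Fin 2) =>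
      h p.1 p.2) (closure Ω ×ˢ closure Ω))
    (G : EuclideanSpace ℝ (Fin 2) → EuclideanSpace ℝ (Fin 2) → ℝ)
    (hG : ∀ x y, x ≠ y → G x y = -(1 / (2 * Real.pi)) * Real.log (dist x y) + h x y)
    (f : EuclideanSpace ℝ (Fin 2) → ℝ) (hf : MemLp f 2 (μ.restrict Ω)) :
    ∃ M : ℝ, 0 < M ∧ ∀ x ∈ Ω,
      IntegrableOn (fun y => G x y * f y) Ω μ ∧
      |∫ y in Ω, G x y * f y ∂μ| ≤ M := by
  obtain ⟨s, hs, C, r, hr, hμ⟩ := exists_isFrostman_of_lowerLinftyDim_pos hdim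
  have hν : IsFrostman (μ.restrict Ω) s C r := hμ.mono Measure.restrict_le_self
  obtain ⟨H, hH⟩ :=
    (hΩb.isCompact_closure.prod hΩb.isCompact_closure).exists_bound_of_continuousOn hh
  have hGbound : ∀ x ∈ Ω, ∀ y ∈ Ω, x ≠ y → |G x y| ≤ 1 / (2 * π) * |log (dist x y)| + H := by
    intro x hx y hy hxy
    have hhxy : |h x y| ≤ H := hH (x, y) ⟨subset_closure hx, subset_closure hy⟩
    rw [hG x y hxy]
    refine (abs_add_le _ _).trans ?_
    rw [abs_mul, abs_neg, abs_of_pos (by positivity)]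
    linarith
  obtain ⟨K, hK, hGK⟩ := hν.exists_eLpNorm_le_of_abs_le_log_dist hs hr one_le_two
    ENNReal.ofNat_ne_top hΩb (mem_ae_iff.1 (ae_restrict_mem hΩo.measurableSet)) (by positivity)
    hGbound
  refine ⟨(K * eLpNorm f 2 (μ.restrict Ω)).toReal + 1, by positivity, fun x hx => ?_⟩
  have hhx : ContinuousOn (h x) Ω :=
    hh.comp (continuous_const.prodMk continuous_id).continuousOn
      fun y hy => ⟨subset_closure hx, subset_closure hy⟩
  have hGx : MemLp (G x) 2 (μ.restrict Ω) :=
    ⟨aestronglyMeasurable_of_eq_log_dist_add (hν.measure_singleton hs hr x)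
      (hhx.aestronglyMeasurable hΩo.measurableSet) _ (hG x), (hGK x hx).trans_lt hK⟩
  obtain ⟨hint, hle⟩ := integrable_mul_and_abs_integral_le hGx hf
  refine ⟨hint, hle.trans ?_⟩
  grw [hGK x hx]
  · linarith
  · finiteness [hf.2]

/-- Proposition 5.3 for d = 2: boundedness of the Green operator. -/
theorem green_operator_bounded
    (Ω : Set (EuclideanSpace ℝ (Fin 2)))
    (hΩo : IsOpen Ω) (hΩconn : IsConnected Ω) (hΩb : Bornology.IsBounded Ω)
    (μ : Measure (EuclideanSpace ℝ (Fin 2))) [IsFiniteMeasure μ]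
    (hsupp : μ (closure Ω)ᶜ = 0) (hμΩ : 0 < μ Ω)
    (hdim : 0 < lowerLinftyDim μ)
    (h : EuclideanSpace ℝ (Fin 2) → EuclideanSpace ℝ (Fin 2) → ℝ)
    (hh : ContinuousOn (fun p : EuclideanSpace ℝ (Fin 2) × EuclideanSpace ℝ (Fin 2) =>
      h p.1 p.2) (closure Ω ×ˢ closure Ω))
    (G : EuclideanSpace ℝ (Fin 2) → EuclideanSpace ℝ (Fin 2) → ℝ)
    (hG : ∀ x y, x ≠ y → G x y = -(1 / (2 * Real.pi)) * Real.log (dist x y) + h x y)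
    (f : EuclideanSpace ℝ (Fin 2) → ℝ) (hf : MemLp f 2 (μ.restrict Ω)) :
    ∃ M : ℝ, 0 < M ∧ ∀ x ∈ Ω,
      IntegrableOn (fun y => G x y * f y) Ω μ ∧
      |∫ y in Ω, G x y * f y ∂μ| ≤ M :=
  green_operator_bounded_general Ω hΩo hΩb μ hdim h hh G hG f hf
end

section
/- Example 6.3 (weak eigenfunction identity for a singular measure on the coordinate cross): Let Ω = (−1,1) × (−1,1) ⊂ ℝ² and u(x,y) = 1 + |xy| − |x| − |y|. Then for every smooth function φ : ℝ² → ℝ with compact support contained in Ω, −∫∫_Ω u(x,y) Δφ(x,y) dx dy = 2 [ ∫_{−1}^{1} (1 − |x|) φ(x,0) dx + ∫_{−1}^{1} (1 − |y|) φ(0,y) dy ], where Δφ = ∂²φ/∂x² + ∂²φ/∂y² and dx dy is two-dimensional Lebesgue measure. (This states that u is a weak eigenfunction with eigenvalue 2 of the Kreĭn–Feller operator −Δ_μ, where μ = μ₀ + μ₁ is the sum of one-dimensional Lebesgue measures on [−1,1]×{0} and {0}×[−1,1], since u(x,0) = 1 − |x| and u(0,y) = 1 − |y|.) -/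
open MeasureTheory Set

/-- The classical Laplacian `Δφ = ∂²φ/∂x² + ∂²φ/∂y²` of `φ : ℝ × ℝ → ℝ`. -/
noncomputable def lap2 (φ : ℝ × ℝ → ℝ) (p : ℝ × ℝ) : ℝ :=
  deriv (fun x => deriv (fun x' => φ (x', p.2)) x) p.1 +
    deriv (fun y => deriv (fun y' => φ (p.1, y')) y) p.2

noncomputable def pdx (φ : ℝ × ℝ → ℝ) (p : ℝ × ℝ) : ℝ := fderiv ℝ φ p (1, 0)
noncomputable def pdy (φ : ℝ × ℝ → ℝ) (p : ℝ × ℝ) : ℝ := fderiv ℝ φ p (0, 1)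

lemma contDiff_pdx {φ : ℝ × ℝ → ℝ} (hφ : ContDiff ℝ (⊤ : ℕ∞) φ) : ContDiff ℝ (⊤ : ℕ∞) (pdx φ) :=
  (ContinuousLinearMap.apply ℝ ℝ ((1, 0) : ℝ × ℝ)).contDiff.comp (hφ.fderiv_right (by simp))

lemma contDiff_pdy {φ : ℝ × ℝ → ℝ} (hφ : ContDiff ℝ (⊤ : ℕ∞) φ) : ContDiff ℝ (⊤ : ℕ∞) (pdy φ) :=
  (ContinuousLinearMap.apply ℝ ℝ ((0, 1) : ℝ × ℝ)).contDiff.comp (hφ.fderiv_right (by simp))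

lemma hasDerivAt_slice_x {φ : ℝ × ℝ → ℝ} (hφ : ContDiff ℝ (⊤ : ℕ∞) φ) (x y : ℝ) :
    HasDerivAt (fun x' => φ (x', y)) (pdx φ (x, y)) x :=
  (hφ.differentiable (by simp) (x, y)).hasFDerivAt.comp_hasDerivAt x
    ((hasDerivAt_id x).prodMk (hasDerivAt_const x y))

lemma hasDerivAt_slice_y {φ : ℝ × ℝ → ℝ} (hφ : ContDiff ℝ (⊤ : ℕ∞) φ) (x y : ℝ) :
    HasDerivAt (fun y' => φ (x, y')) (pdy φ (x, y)) y :=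
  (hφ.differentiable (by simp) (x, y)).hasFDerivAt.comp_hasDerivAt y
    ((hasDerivAt_const y x).prodMk (hasDerivAt_id y))

lemma lap2_eq {φ : ℝ × ℝ → ℝ} (hφ : ContDiff ℝ (⊤ : ℕ∞) φ) (p : ℝ × ℝ) :
    lap2 φ p = pdx (pdx φ) p + pdy (pdy φ) p := by
  have h1 : (fun x => deriv (fun x' => φ (x', p.2)) x) = fun x => pdx φ (x, p.2) := by
    funext x; exact (hasDerivAt_slice_x hφ x p.2).deriv
  have h2 : (fun y => deriv (fun y' => φ (p.1, y')) y) = fun y => pdy φ (p.1, y) := by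
    funext y; exact (hasDerivAt_slice_y hφ p.1 y).deriv
  unfold lap2
  rw [h1, h2, (hasDerivAt_slice_x (contDiff_pdx hφ) p.1 p.2).deriv,
    (hasDerivAt_slice_y (contDiff_pdy hφ) p.1 p.2).deriv]

lemma oneD (g g' g'' : ℝ → ℝ) (hg : ∀ x, HasDerivAt g (g' x) x)
    (hg' : ∀ x, HasDerivAt g' (g'' x) x) (hc' : Continuous g') (hc'' : Continuous g'')
    (ha : g (-1) = 0) (hb : g 1 = 0) :
    ∫ x in (-1 : ℝ)..1, (1 - |x|) * g'' x = -2 * g 0 := by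
  have hcont : Continuous fun x => (1 - |x|) * g'' x := by fun_prop
  have hsplit : ∫ x in (-1 : ℝ)..1, (1 - |x|) * g'' x =
      (∫ x in (-1 : ℝ)..0, (1 - |x|) * g'' x) + ∫ x in (0 : ℝ)..1, (1 - |x|) * g'' x :=
    (intervalIntegral.integral_add_adjacent_intervals (hcont.intervalIntegrable _ _)
      (hcont.intervalIntegrable _ _)).symm
  have hL : ∫ x in (-1 : ℝ)..0, (1 - |x|) * g'' x = ∫ x in (-1 : ℝ)..0, (1 + x) * g'' x := by
    apply intervalIntegral.integral_congr
    intro x hx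
    rw [uIcc_of_le (by norm_num : (-1 : ℝ) ≤ 0)] at hx
    show (1 - |x|) * g'' x = (1 + x) * g'' x
    rw [abs_of_nonpos hx.2]; ring
  have hR : ∫ x in (0 : ℝ)..1, (1 - |x|) * g'' x = ∫ x in (0 : ℝ)..1, (1 - x) * g'' x := by
    apply intervalIntegral.integral_congr
    intro x hx
    rw [uIcc_of_le (by norm_num : (0 : ℝ) ≤ 1)] at hx
    show (1 - |x|) * g'' x = (1 - x) * g'' x
    rw [abs_of_nonneg hx.1]
  have hftcL : ∫ x in (-1 : ℝ)..0, g' x = g 0 - g (-1) :=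
    intervalIntegral.integral_eq_sub_of_hasDerivAt (fun x _ => hg x)
      (hc'.intervalIntegrable _ _)
  have hftcR : ∫ x in (0 : ℝ)..1, g' x = g 1 - g 0 :=
    intervalIntegral.integral_eq_sub_of_hasDerivAt (fun x _ => hg x)
      (hc'.intervalIntegrable _ _)
  have hibpL : ∫ x in (-1 : ℝ)..0, (1 + x) * g'' x =
      (1 + 0) * g' 0 - (1 + -1) * g' (-1) - ∫ x in (-1 : ℝ)..0, 1 * g' x := by
    have := intervalIntegral.integral_mul_deriv_eq_deriv_mul
      (a := (-1:ℝ)) (b := (0:ℝ)) (u := fun x => 1 + x) (u' := fun _ => (1 : ℝ)) (v := g') (v' := g'')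
      (fun x _ => (hasDerivAt_id x).const_add 1) (fun x _ => hg' x)
      ((continuous_const).intervalIntegrable _ _) (hc''.intervalIntegrable _ _)
    simpa using this
  have hibpR : ∫ x in (0 : ℝ)..1, (1 - x) * g'' x =
      (1 - 1) * g' 1 - (1 - 0) * g' 0 - ∫ x in (0 : ℝ)..1, (-1) * g' x := by
    have := intervalIntegral.integral_mul_deriv_eq_deriv_mul
      (a := (0:ℝ)) (b := (1:ℝ)) (u := fun x => 1 - x) (u' := fun _ => (-1 : ℝ)) (v := g') (v' := g'')
      (fun x _ => (hasDerivAt_id x).const_sub 1) (fun x _ => hg' x)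
      ((continuous_const).intervalIntegrable _ _) (hc''.intervalIntegrable _ _)
    simpa using this
  have e1 : ∫ x in (-1 : ℝ)..0, 1 * g' x = g 0 - g (-1) := by
    simpa using hftcL
  have e2 : ∫ x in (0 : ℝ)..1, (-1) * g' x = -(g 1 - g 0) := by
    rw [intervalIntegral.integral_const_mul, hftcR]; ring
  rw [hsplit, hL, hR, hibpL, hibpR, e1, e2]
  rw [ha, hb] at *
  ring

/-- Example 6.3: weak eigenfunction identity for a singular measure on the
coordinate cross of the square `(−1,1) × (−1,1)`. -/
theorem example_cross_weak_eigenfunction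
    (φ : ℝ × ℝ → ℝ) (hφ : ContDiff ℝ (⊤ : ℕ∞) φ) (hφc : HasCompactSupport φ)
    (hφsupp : tsupport φ ⊆ Ioo (-1 : ℝ) 1 ×ˢ Ioo (-1 : ℝ) 1) :
    -(∫ p in Ioo (-1 : ℝ) 1 ×ˢ Ioo (-1 : ℝ) 1,
        (1 + |p.1 * p.2| - |p.1| - |p.2|) * lap2 φ p) =
      2 * ((∫ x in (-1 : ℝ)..1, (1 - |x|) * φ (x, 0)) +
        ∫ y in (-1 : ℝ)..1, (1 - |y|) * φ (0, y)) := by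
  classical
  have hzero : ∀ p : ℝ × ℝ, p ∉ Ioo (-1 : ℝ) 1 ×ˢ Ioo (-1 : ℝ) 1 → φ p = 0 := fun p hp =>
    image_eq_zero_of_notMem_tsupport (fun h => hp (hφsupp h))
  set s : Set ℝ := Ioo (-1 : ℝ) 1 with hs
  set f1 : ℝ × ℝ → ℝ := fun p => (1 - |p.2|) * ((1 - |p.1|) * pdx (pdx φ) p) with hf1
  set f2 : ℝ × ℝ → ℝ := fun p => (1 - |p.1|) * ((1 - |p.2|) * pdy (pdy φ) p) with hf2
  have c2x : Continuous (pdx (pdx φ)) := (contDiff_pdx (contDiff_pdx hφ)).continuous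
  have c2y : Continuous (pdy (pdy φ)) := (contDiff_pdy (contDiff_pdy hφ)).continuous
  have cf1 : Continuous f1 := by
    apply Continuous.mul (by fun_prop)
    exact Continuous.mul (by fun_prop) c2x
  have cf2 : Continuous f2 := by
    apply Continuous.mul (by fun_prop)
    exact Continuous.mul (by fun_prop) c2y
  have hsub : s ×ˢ s ⊆ Icc (-1 : ℝ) 1 ×ˢ Icc (-1 : ℝ) 1 :=
    prod_mono Ioo_subset_Icc_self Ioo_subset_Icc_self
  have hi1 : IntegrableOn f1 (s ×ˢ s) :=
    (cf1.continuousOn.integrableOn_compact (isCompact_Icc.prod isCompact_Icc)).mono_set hsub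
  have hi2 : IntegrableOn f2 (s ×ˢ s) :=
    (cf2.continuousOn.integrableOn_compact (isCompact_Icc.prod isCompact_Icc)).mono_set hsub
  have key : (volume : Measure (ℝ × ℝ)).restrict (s ×ˢ s) =
      ((volume : Measure ℝ).restrict s).prod ((volume : Measure ℝ).restrict s) := by
    rw [Measure.prod_restrict, ← Measure.volume_eq_prod]
  have hsplit : ∫ p in s ×ˢ s, (1 + |p.1 * p.2| - |p.1| - |p.2|) * lap2 φ p =
      (∫ p in s ×ˢ s, f1 p) + ∫ p in s ×ˢ s, f2 p := by
    rw [← integral_add hi1 hi2]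
    apply setIntegral_congr_fun (measurableSet_Ioo.prod measurableSet_Ioo)
    intro p _
    show (1 + |p.1 * p.2| - |p.1| - |p.2|) * lap2 φ p = f1 p + f2 p
    rw [lap2_eq hφ, abs_mul, hf1, hf2]; ring
  -- the f1 term
  have inner1 : ∀ y : ℝ, ∫ x in s, f1 (x, y) = (1 - |y|) * (-2 * φ (0, y)) := by
    intro y
    have : ∫ x in s, f1 (x, y) = (1 - |y|) * ∫ x in s, (1 - |x|) * pdx (pdx φ) (x, y) := by
      rw [← integral_const_mul]
    rw [this]
    congr 1
    have hconv : ∫ x in s, (1 - |x|) * pdx (pdx φ) (x, y) =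
        ∫ x in (-1 : ℝ)..1, (1 - |x|) * pdx (pdx φ) (x, y) := by
      rw [intervalIntegral.integral_of_le (by norm_num : (-1 : ℝ) ≤ 1),
        integral_Ioc_eq_integral_Ioo]
    rw [hconv]
    exact oneD (fun x => φ (x, y)) (fun x => pdx φ (x, y)) (fun x => pdx (pdx φ) (x, y))
      (fun x => hasDerivAt_slice_x hφ x y)
      (fun x => hasDerivAt_slice_x (contDiff_pdx hφ) x y)
      ((contDiff_pdx hφ).continuous.comp (by fun_prop))
      (c2x.comp (by fun_prop))
      (hzero (-1, y) (fun h => absurd h.1 (by norm_num [hs])))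
      (hzero (1, y) (fun h => absurd h.1 (by norm_num [hs])))
  have h1 : ∫ p in s ×ˢ s, f1 p = -2 * ∫ y in (-1 : ℝ)..1, (1 - |y|) * φ (0, y) := by
    have hfub : ∫ p in s ×ˢ s, f1 p = ∫ y in s, ∫ x in s, f1 (x, y) := by
      have hint : Integrable f1 (((volume : Measure ℝ).restrict s).prod
          ((volume : Measure ℝ).restrict s)) := by rw [← key]; exact hi1
      calc ∫ p in s ×ˢ s, f1 p = ∫ p, f1 p ∂(((volume : Measure ℝ).restrict s).prod
            ((volume : Measure ℝ).restrict s)) := by rw [← key]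
        _ = ∫ y in s, ∫ x in s, f1 (x, y) := integral_prod_symm f1 hint
    rw [hfub, integral_congr_ae (Filter.Eventually.of_forall inner1)]
    rw [intervalIntegral.integral_of_le (by norm_num : (-1 : ℝ) ≤ 1),
      integral_Ioc_eq_integral_Ioo, ← integral_const_mul]
    exact integral_congr_ae (Filter.Eventually.of_forall fun y => by ring)
  -- the f2 term
  have inner2 : ∀ x : ℝ, ∫ y in s, f2 (x, y) = (1 - |x|) * (-2 * φ (x, 0)) := by
    intro x
    have : ∫ y in s, f2 (x, y) = (1 - |x|) * ∫ y in s, (1 - |y|) * pdy (pdy φ) (x, y) := by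
      rw [← integral_const_mul]
    rw [this]
    congr 1
    have hconv : ∫ y in s, (1 - |y|) * pdy (pdy φ) (x, y) =
        ∫ y in (-1 : ℝ)..1, (1 - |y|) * pdy (pdy φ) (x, y) := by
      rw [intervalIntegral.integral_of_le (by norm_num : (-1 : ℝ) ≤ 1),
        integral_Ioc_eq_integral_Ioo]
    rw [hconv]
    exact oneD (fun y => φ (x, y)) (fun y => pdy φ (x, y)) (fun y => pdy (pdy φ) (x, y))
      (fun y => hasDerivAt_slice_y hφ x y)
      (fun y => hasDerivAt_slice_y (contDiff_pdy hφ) x y)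
      ((contDiff_pdy hφ).continuous.comp (by fun_prop))
      (c2y.comp (by fun_prop))
      (hzero (x, -1) (fun h => absurd h.2 (by norm_num [hs])))
      (hzero (x, 1) (fun h => absurd h.2 (by norm_num [hs])))
  have h2 : ∫ p in s ×ˢ s, f2 p = -2 * ∫ x in (-1 : ℝ)..1, (1 - |x|) * φ (x, 0) := by
    have hfub : ∫ p in s ×ˢ s, f2 p = ∫ x in s, ∫ y in s, f2 (x, y) := by
      have hint : Integrable f2 (((volume : Measure ℝ).restrict s).prod
          ((volume : Measure ℝ).restrict s)) := by rw [← key]; exact hi2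
      calc ∫ p in s ×ˢ s, f2 p = ∫ p, f2 p ∂(((volume : Measure ℝ).restrict s).prod
            ((volume : Measure ℝ).restrict s)) := by rw [← key]
        _ = ∫ x in s, ∫ y in s, f2 (x, y) := integral_prod f2 hint
    rw [hfub, integral_congr_ae (Filter.Eventually.of_forall inner2)]
    rw [intervalIntegral.integral_of_le (by norm_num : (-1 : ℝ) ≤ 1),
      integral_Ioc_eq_integral_Ioo, ← integral_const_mul]
    exact integral_congr_ae (Filter.Eventually.of_forall fun x => by ring)
  rw [hsplit, h1, h2]
  ring
end
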